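/- Let Θ ⊆ ℝ^d be convex, f : Θ → ℝ be ξ⁻¹-strongly convex on Θ for some ξ ∈ (0,∞), and π = Z⁻¹ exp(−f) the corresponding target density. For the random walk Metropolis-Hastings chain with Gaussian proposal N(θ, h I_d), for any θ₀ ∈ Θ and any subgradient v ∈ ∂f(θ₀), the acceptance probability satisfies A(θ₀) ≤ (1 + h/ξ)^{−d/2} exp{ (h/2) (1/(1 + h/ξ)) ‖v‖₂² }. -/

import Mathlib

/-!
The proposal is symmetric, so for `θ ∈ Θ` the integrand `a_MH(θ₀,θ) q(θ₀,θ)` is at most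
`π(θ)/π(θ₀) · q(θ₀,θ) = exp(f θ₀ - f θ) q(θ₀,θ)`, and off `Θ` it vanishes. Strong convexity turns
the subgradient inequality at `θ₀` into the quadratic lower bound
`f θ ≥ f θ₀ + ⟪v, θ - θ₀⟫ + ‖θ - θ₀‖² / (2ξ)`, so `A(θ₀)` is at most the integral of a Gaussian
with variance `h` times `exp(-⟪v, θ - θ₀⟫ - ‖θ - θ₀‖² / (2ξ))`: a Gaussian integral with precision
`1/h + 1/ξ` and a linear term, computed in closed form.
-/

open MeasureTheory

/-- The Metropolis-Hastings acceptance function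
`a_MH(θ,θ') = min(π(θ')q(θ',θ)/(π(θ)q(θ,θ')), 1)`, equal to `1` when `π(θ)q(θ,θ') = 0`. -/
noncomputable def mhAcceptFn {α : Type*} (pi : α → ℝ) (q : α → α → ℝ) (θ θ' : α) : ℝ :=
  if 0 < pi θ * q θ θ' then min ((pi θ' * q θ' θ) / (pi θ * q θ θ')) 1 else 1

/-- The Metropolis-Hastings acceptance probability `A(θ) = ∫ a_MH(θ,θ') q(θ,θ') dλ(θ')`. -/
noncomputable def mhAcceptProb {α : Type*} [MeasurableSpace α] (lam : Measure α)
    (pi : α → ℝ) (q : α → α → ℝ) (θ : α) : ℝ :=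
  ∫ θ', mhAcceptFn pi q θ θ' * q θ θ' ∂lam

/-- The Metropolis-Hastings Markov kernel
`P(θ,B) = ∫_B a_MH(θ,θ') q(θ,θ') dλ(θ') + δ_θ(B)(1 − A(θ))`. -/
noncomputable def mhKernel {α : Type*} [MeasurableSpace α] (lam : Measure α)
    (pi : α → ℝ) (q : α → α → ℝ) (θ : α) : Measure α :=
  lam.withDensity (fun θ' => ENNReal.ofReal (mhAcceptFn pi q θ θ' * q θ θ')) +
    (ENNReal.ofReal (1 - mhAcceptProb lam pi q θ)) • Measure.dirac θ

/-- The `t`-step iterate `P^t(θ,·)` of a Markov kernel, with `P^0(θ,·) = δ_θ`. -/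
noncomputable def iterK {Ω : Type*} [MeasurableSpace Ω] (P : Ω → Measure Ω) :
    ℕ → Ω → Measure Ω
  | 0 => fun θ => Measure.dirac θ
  | (t + 1) => fun θ => (iterK P t θ).bind P

/-- Total variation distance:
`‖μ − ν‖_TV = sup { ∫ f dμ − ∫ f dν : f measurable, 0 ≤ f ≤ 1 }`. -/
noncomputable def tvDist {Ω : Type*} [MeasurableSpace Ω] (μ ν : Measure Ω) : ℝ :=
  ⨆ f : {f : Ω → ℝ // Measurable f ∧ ∀ x, f x ∈ Set.Icc (0:ℝ) 1},
    (∫ x, f.1 x ∂μ - ∫ x, f.1 x ∂ν)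

/-- The Gaussian random walk proposal density
`q(θ,θ') = (2πh)^{−d/2} exp(−‖θ'−θ‖₂²/(2h))` of `N(θ, h I_d)`. -/
noncomputable def rwProposal (h : ℝ) (d : ℕ) (θ θ' : Fin d → ℝ) : ℝ :=
  (2 * Real.pi * h) ^ (-(d : ℝ) / 2) * Real.exp (-(∑ i, (θ' i - θ i) ^ 2) / (2 * h))

/-- The log-concave target density `π = Z⁻¹ exp(−f)` on `Θ` (and `0` off `Θ`), where
`Z = ∫_Θ exp(−f)`. -/
noncomputable def logConcaveTarget {d : ℕ} (Θ : Set (Fin d → ℝ))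
    (f : (Fin d → ℝ) → ℝ) : (Fin d → ℝ) → ℝ :=
  Θ.indicator (fun θ => Real.exp (-f θ) / ∫ x in Θ, Real.exp (-f x))


open Real Filter Topology

theorem integral_rexp_neg_mul_sum_add {ι : Type*} [Fintype ι] {a : ℝ} (ha : 0 < a) (c : ι → ℝ) :
    ∫ x : ι → ℝ, rexp (-a * ∑ i, x i ^ 2 + ∑ i, c i * x i) =
      (π / a) ^ ((Fintype.card ι : ℝ) / 2) * rexp ((∑ i, c i ^ 2) / (4 * a)) := by
  apply Complex.ofReal_injective
  rw [← integral_complex_ofReal]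
  push_cast
  rw [Complex.ofReal_cpow (by positivity)]
  push_cast
  exact GaussianFourier.integral_cexp_neg_mul_sum_add (b := (a : ℂ)) (by simpa) (c ·)

theorem integrable_rexp_neg_mul_sum_add {ι : Type*} [Fintype ι] {a : ℝ} (ha : 0 < a) (c : ι → ℝ) :
    Integrable (fun x : ι → ℝ => rexp (-a * ∑ i, x i ^ 2 + ∑ i, c i * x i)) := by
  convert (GaussianFourier.integrable_cexp_neg_mul_sum_add (b := (a : ℂ)) (by simpa) (c ·)).re
    using 2 with x
  rw [← Complex.exp_ofReal_re]
  push_cast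
  rfl

theorem StrongConvexOn.add_le_of_subgradient {E : Type*} [NormedAddCommGroup E]
    [NormedSpace ℝ E] {s : Set E} {m : ℝ} {f : E → ℝ} (hf : StrongConvexOn s m f)
    (ℓ : E →ₗ[ℝ] ℝ) {x₀ x : E} (hx₀ : x₀ ∈ s) (hx : x ∈ s)
    (hℓ : ∀ y ∈ s, f x₀ + ℓ (y - x₀) ≤ f y) :
    f x₀ + ℓ (x - x₀) + m / 2 * ‖x - x₀‖ ^ 2 ≤ f x := by
  have hseg : ∀ t ∈ Set.Ioo (0 : ℝ) 1,
      f x₀ + ℓ (x - x₀) + (1 - t) * (m / 2 * ‖x - x₀‖ ^ 2) ≤ f x := by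
    rintro t ⟨ht₀, ht₁⟩
    have hsub := hℓ _ (hf.1 hx₀ hx (sub_nonneg.2 ht₁.le) ht₀.le (sub_add_cancel 1 t))
    have hconv := hf.2 hx₀ hx (sub_nonneg.2 ht₁.le) ht₀.le (sub_add_cancel 1 t)
    have hdir : (1 - t) • x₀ + t • x - x₀ = t • (x - x₀) := by
      rw [smul_sub, sub_smul, one_smul]; abel
    rw [hdir, map_smul, smul_eq_mul] at hsub
    rw [norm_sub_rev, smul_eq_mul, smul_eq_mul] at hconv
    refine le_of_mul_le_mul_left ?_ ht₀
    linarith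
  have hlim : Tendsto (fun t : ℝ => f x₀ + ℓ (x - x₀) + (1 - t) * (m / 2 * ‖x - x₀‖ ^ 2))
      (𝓝[>] 0) (𝓝 (f x₀ + ℓ (x - x₀) + m / 2 * ‖x - x₀‖ ^ 2)) := by
    have : Continuous fun t : ℝ => f x₀ + ℓ (x - x₀) + (1 - t) * (m / 2 * ‖x - x₀‖ ^ 2) := by
      fun_prop
    simpa using (this.tendsto 0).mono_left nhdsWithin_le_nhds
  exact le_of_tendsto hlim (Filter.mem_of_superset (Ioo_mem_nhdsGT one_pos) hseg)

theorem subgradient_add_sum_sq_le {ι : Type*} [Fintype ι] {Θ : Set (ι → ℝ)}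
    {f : (ι → ℝ) → ℝ} {ξ : ℝ} (hsc : ConvexOn ℝ Θ (fun θ => f θ - (∑ i, θ i ^ 2) / (2 * ξ)))
    {θ₀ θ v : ι → ℝ} (hθ₀ : θ₀ ∈ Θ) (hθ : θ ∈ Θ)
    (hv : ∀ θ ∈ Θ, f θ₀ + ∑ i, v i * (θ i - θ₀ i) ≤ f θ) :
    f θ₀ + ∑ i, v i * (θ i - θ₀ i) + (∑ i, (θ i - θ₀ i) ^ 2) / (2 * ξ) ≤ f θ := by
  -- `ι → ℝ` carries the sup norm, so strong convexity is read off on `EuclideanSpace ℝ ι`.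
  let e := WithLp.linearEquiv 2 ℝ (ι → ℝ)
  have hinner : ∀ x : EuclideanSpace ℝ ι, inner ℝ (WithLp.toLp 2 v) x = ∑ i, v i * x i := by
    intro x
    simp [PiLp.inner_apply, mul_comm]
  have hnorm : ∀ x : EuclideanSpace ℝ ι, ‖x‖ ^ 2 = ∑ i, x i ^ 2 := by
    intro x
    simp [EuclideanSpace.real_norm_sq_eq]
  have hstrong : StrongConvexOn (e ⁻¹' Θ) ξ⁻¹ (f ∘ e) := by
    rw [strongConvexOn_iff_convex]
    refine (hsc.comp_linearMap e.toLinearMap).congr fun x _ => ?_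
    change f x.ofLp - (∑ i, x.ofLp i ^ 2) / (2 * ξ) = f x.ofLp - ξ⁻¹ / 2 * ‖x‖ ^ 2
    rw [hnorm]
    ring
  have := hstrong.add_le_of_subgradient (innerₛₗ ℝ (WithLp.toLp 2 v)) (x₀ := WithLp.toLp 2 θ₀)
    (x := WithLp.toLp 2 θ) hθ₀ hθ (fun y hy => by simpa [hinner, e] using hv _ hy)
  simpa [hinner, hnorm, e, div_eq_mul_inv, mul_comm] using this

section MetropolisHastings

variable {α : Type*} {pi : α → ℝ} {q : α → α → ℝ} {θ θ' : α}

theorem mhAcceptFn_nonneg (hpi : 0 ≤ pi θ') (hq : 0 ≤ q θ' θ) : 0 ≤ mhAcceptFn pi q θ θ' := by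
  unfold mhAcceptFn
  split_ifs with hpos
  · exact le_min (div_nonneg (mul_nonneg hpi hq) hpos.le) zero_le_one
  · exact zero_le_one

theorem mhAcceptFn_mul_le (hpi : 0 < pi θ) (hq : 0 < q θ θ') :
    mhAcceptFn pi q θ θ' * q θ θ' ≤ pi θ' * q θ' θ / pi θ := by
  rw [mhAcceptFn, if_pos (mul_pos hpi hq)]
  calc min (pi θ' * q θ' θ / (pi θ * q θ θ')) 1 * q θ θ'
      ≤ pi θ' * q θ' θ / (pi θ * q θ θ') * q θ θ' := by gcongr; exact min_le_left _ _
    _ = pi θ' * q θ' θ / pi θ := by field_simp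

end MetropolisHastings

section GaussianProposal

variable {d : ℕ} {h ξ : ℝ}

theorem rwProposal_pos (hh : 0 < h) (θ θ' : Fin d → ℝ) : 0 < rwProposal h d θ θ' := by
  unfold rwProposal
  positivity

theorem rwProposal_comm (θ θ' : Fin d → ℝ) : rwProposal h d θ θ' = rwProposal h d θ' θ := by
  simp only [rwProposal, ← neg_sub (θ' _) (θ _), neg_sq]

theorem rwProposal_mul_exp_eq (hh : 0 < h) (θ₀ v θ : Fin d → ℝ) :
    rwProposal h d θ₀ θ * rexp (-(∑ i, v i * (θ i - θ₀ i)) - (∑ i, (θ i - θ₀ i) ^ 2) / (2 * ξ)) =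
      (2 * π * h) ^ (-(d : ℝ) / 2) * rexp (-(1 / (2 * h) + 1 / (2 * ξ)) *
        ∑ i, (θ - θ₀) i ^ 2 + ∑ i, -v i * (θ - θ₀) i) := by
  simp only [rwProposal, Pi.sub_apply, neg_mul, Finset.sum_neg_distrib, mul_assoc, ← exp_add]
  congr 2
  field_simp
  ring

theorem integrable_rwProposal_mul_exp (hh : 0 < h) (hξ : 0 < ξ) (θ₀ v : Fin d → ℝ) :
    Integrable fun θ => rwProposal h d θ₀ θ *
      rexp (-(∑ i, v i * (θ i - θ₀ i)) - (∑ i, (θ i - θ₀ i) ^ 2) / (2 * ξ)) := by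
  simp only [rwProposal_mul_exp_eq hh]
  exact ((integrable_rexp_neg_mul_sum_add (by positivity) _).comp_sub_right θ₀).const_mul _

theorem integral_rwProposal_mul_exp (hh : 0 < h) (hξ : 0 < ξ) (θ₀ v : Fin d → ℝ) :
    ∫ θ, rwProposal h d θ₀ θ *
      rexp (-(∑ i, v i * (θ i - θ₀ i)) - (∑ i, (θ i - θ₀ i) ^ 2) / (2 * ξ)) =
      (1 + h / ξ) ^ (-(d : ℝ) / 2) * rexp (h / 2 * (1 / (1 + h / ξ)) * ∑ i, v i ^ 2) := by
  have hα : 0 < 1 / (2 * h) + 1 / (2 * ξ) := by positivity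
  simp only [rwProposal_mul_exp_eq hh]
  rw [integral_const_mul, integral_sub_right_eq_self
    (fun y => rexp (-(1 / (2 * h) + 1 / (2 * ξ)) * ∑ i, y i ^ 2 + ∑ i, -v i * y i)) θ₀,
    integral_rexp_neg_mul_sum_add hα, Fintype.card_fin]
  have hpi : π / (1 / (2 * h) + 1 / (2 * ξ)) = 2 * π * h / (1 + h / ξ) := by
    field_simp
  have hexp : (∑ i, (-v i) ^ 2) / (4 * (1 / (2 * h) + 1 / (2 * ξ))) =
      h / 2 * (1 / (1 + h / ξ)) * ∑ i, v i ^ 2 := by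
    simp only [neg_sq]
    field_simp
    ring
  rw [hpi, hexp, ← mul_assoc, div_rpow (by positivity) (by positivity), ← mul_div_assoc,
    ← rpow_add (by positivity), neg_div, neg_add_cancel, rpow_zero, one_div,
    ← rpow_neg (by positivity)]

end GaussianProposal

section LogConcaveTarget

variable {d : ℕ} {Θ : Set (Fin d → ℝ)} {f : (Fin d → ℝ) → ℝ} {θ θ' : Fin d → ℝ}

theorem logConcaveTarget_nonneg : 0 ≤ logConcaveTarget Θ f θ :=
  Set.indicator_nonneg (fun _ _ => div_nonneg (exp_pos _).le
    (integral_nonneg fun _ => (exp_pos _).le)) _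

theorem logConcaveTarget_pos (hZ : 0 < ∫ x in Θ, rexp (-f x)) (hθ : θ ∈ Θ) :
    0 < logConcaveTarget Θ f θ := by
  rw [logConcaveTarget, Set.indicator_of_mem hθ]
  positivity

theorem logConcaveTarget_div (hZ : 0 < ∫ x in Θ, rexp (-f x)) (hθ : θ ∈ Θ) (hθ' : θ' ∈ Θ) :
    logConcaveTarget Θ f θ' / logConcaveTarget Θ f θ = rexp (f θ - f θ') := by
  rw [logConcaveTarget, Set.indicator_of_mem hθ, Set.indicator_of_mem hθ',
    div_div_div_cancel_right₀ hZ.ne', ← exp_sub, neg_sub_neg]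

end LogConcaveTarget

theorem rwmh_integrand_le {d : ℕ} {h ξ : ℝ} (hh : 0 < h) {Θ : Set (Fin d → ℝ)}
    {f : (Fin d → ℝ) → ℝ} (hsc : ConvexOn ℝ Θ (fun θ => f θ - (∑ i, θ i ^ 2) / (2 * ξ)))
    (hZ : 0 < ∫ x in Θ, rexp (-f x)) {θ₀ v : Fin d → ℝ} (hθ₀ : θ₀ ∈ Θ)
    (hv : ∀ θ ∈ Θ, f θ₀ + ∑ i, v i * (θ i - θ₀ i) ≤ f θ) (θ : Fin d → ℝ) :
    mhAcceptFn (logConcaveTarget Θ f) (rwProposal h d) θ₀ θ * rwProposal h d θ₀ θ ≤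
      rwProposal h d θ₀ θ *
        rexp (-(∑ i, v i * (θ i - θ₀ i)) - (∑ i, (θ i - θ₀ i) ^ 2) / (2 * ξ)) := by
  refine (mhAcceptFn_mul_le (logConcaveTarget_pos hZ hθ₀) (rwProposal_pos hh _ _)).trans ?_
  rw [rwProposal_comm θ, mul_div_right_comm, mul_comm]
  have hq := (rwProposal_pos hh θ₀ θ).le
  gcongr
  by_cases hθ : θ ∈ Θ
  · rw [logConcaveTarget_div hZ hθ₀ hθ, exp_le_exp]
    linarith [subgradient_add_sum_sq_le hsc hθ₀ hθ hv]
  · rw [logConcaveTarget, Set.indicator_of_notMem hθ, zero_div]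
    positivity

theorem rwmh_strongly_convex_accept_bound_general
    {d : ℕ} (h ξ : ℝ) (hh : 0 < h) (hξ : 0 < ξ)
    (Θ : Set (Fin d → ℝ))
    (f : (Fin d → ℝ) → ℝ)
    (hsc : ConvexOn ℝ Θ (fun θ => f θ - (∑ i, θ i ^ 2) / (2 * ξ)))
    (hZ : 0 < ∫ x in Θ, Real.exp (-f x))
    (θ₀ : Fin d → ℝ) (hθ₀ : θ₀ ∈ Θ)
    (v : Fin d → ℝ)
    (hv : ∀ θ ∈ Θ, f θ₀ + ∑ i, v i * (θ i - θ₀ i) ≤ f θ) :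
    mhAcceptProb volume (logConcaveTarget Θ f) (rwProposal h d) θ₀ ≤
      (1 + h / ξ) ^ (-(d : ℝ) / 2) *
        Real.exp (h / 2 * (1 / (1 + h / ξ)) * ∑ i, v i ^ 2) := by
  have hq : ∀ θ θ', 0 ≤ rwProposal h d θ θ' := fun θ θ' => (rwProposal_pos hh θ θ').le
  calc mhAcceptProb volume (logConcaveTarget Θ f) (rwProposal h d) θ₀
      ≤ ∫ θ, rwProposal h d θ₀ θ *
          rexp (-(∑ i, v i * (θ i - θ₀ i)) - (∑ i, (θ i - θ₀ i) ^ 2) / (2 * ξ)) :=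
        integral_mono_of_nonneg
          (.of_forall fun θ => mul_nonneg (mhAcceptFn_nonneg logConcaveTarget_nonneg (hq θ θ₀))
            (hq θ₀ θ))
          (integrable_rwProposal_mul_exp hh hξ θ₀ v)
          (.of_forall (rwmh_integrand_le hh hsc hZ hθ₀ hv))
    _ = _ := integral_rwProposal_mul_exp hh hξ θ₀ v

/-- Proposition 3: for RWMH with proposal `N(θ, h I_d)` and a `ξ⁻¹`-strongly convex
potential `f` on convex `Θ`, for any `θ₀ ∈ Θ` and any subgradient `v ∈ ∂f(θ₀)`,
`A(θ₀) ≤ (1 + h/ξ)^{−d/2} exp((h/2)(1/(1+h/ξ))‖v‖₂²)`. -/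
theorem rwmh_strongly_convex_accept_bound
    {d : ℕ} (hd : 0 < d) (h ξ : ℝ) (hh : 0 < h) (hξ : 0 < ξ)
    (Θ : Set (Fin d → ℝ)) (hΘne : Θ.Nonempty) (hΘconv : Convex ℝ Θ)
    (hΘmeas : MeasurableSet Θ)
    (f : (Fin d → ℝ) → ℝ) (hfm : Measurable f)
    (hsc : ConvexOn ℝ Θ (fun θ => f θ - (∑ i, θ i ^ 2) / (2 * ξ)))
    (hfint : IntegrableOn (fun θ => Real.exp (-f θ)) Θ volume)
    (hZ : 0 < ∫ x in Θ, Real.exp (-f x))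
    (θ₀ : Fin d → ℝ) (hθ₀ : θ₀ ∈ Θ)
    (v : Fin d → ℝ)
    (hv : ∀ θ ∈ Θ, f θ₀ + ∑ i, v i * (θ i - θ₀ i) ≤ f θ) :
    mhAcceptProb volume (logConcaveTarget Θ f) (rwProposal h d) θ₀ ≤
      (1 + h / ξ) ^ (-(d : ℝ) / 2) *
        Real.exp (h / 2 * (1 / (1 + h / ξ)) * ∑ i, v i ^ 2) :=
  rwmh_strongly_convex_accept_bound_general h ξ hh hξ Θ f hsc hZ θ₀ hθ₀ v hv
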